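/- arXiv:1407.4082 — 5 statements merged into one kernel-verified Lean document; each statement's English description precedes it below -/
import Mathlib

section
/- Let L be a Lie algebra over a field k, let h be a Lie subalgebra of L, and let q be a linear subspace of L such that L = h ⊕ q as k-vector spaces. Let π : L → L denote the linear projection onto q along h. Then for every f ∈ h and every n ≥ 1, one has π ∘ (ad f)^n = (π ∘ ad f)^n as linear operators on L, where ad f denotes the adjoint operator x ↦ [f, x]. -/
/-- Let `L` be a Lie algebra over a field `k`, `h` a Lie subalgebra of `L`,
and `q` a linear subspace of `L` with `L = h ⊕ q` as `k`-vector spaces.  Let `π : L → L` be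
the linear projection onto `q` along `h` (i.e. `π x ∈ q` and `x - π x ∈ h` for all `x`).
Then for every `f ∈ h` and every `n ≥ 1`,
`π ∘ (ad f)^n = (π ∘ ad f)^n` as linear operators on `L`. -/
theorem stmt0 {k : Type*} [Field k] {L : Type*} [LieRing L] [LieAlgebra k L]
    (h : LieSubalgebra k L) (q : Submodule k L)
    (hcompl : IsCompl h.toSubmodule q)
    (π : L →ₗ[k] L)
    (hπq : ∀ x : L, π x ∈ q)
    (hπh : ∀ x : L, x - π x ∈ h.toSubmodule) :
    ∀ f ∈ h, ∀ n : ℕ, 1 ≤ n →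
      π ∘ₗ ((LieAlgebra.ad k L f) ^ n : Module.End k L)
        = ((π ∘ₗ LieAlgebra.ad k L f : Module.End k L) ^ n : Module.End k L) := by
  intro f hf
  have hker : ∀ y ∈ h.toSubmodule, π y = 0 := by
    intro y hy
    have h1 : π y ∈ h.toSubmodule := by
      have := sub_mem hy (hπh y)
      simpa using this
    have h2 : π y ∈ h.toSubmodule ⊓ q := ⟨h1, hπq y⟩
    rwa [hcompl.inf_eq_bot, Submodule.mem_bot] at h2
  have key : π ∘ₗ LieAlgebra.ad k L f
      = (π ∘ₗ LieAlgebra.ad k L f) ∘ₗ π := by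
    ext x
    have hx : ⁅f, x - π x⁆ ∈ h.toSubmodule := h.lie_mem hf (hπh x)
    have h0 : π ⁅f, x - π x⁆ = 0 := hker _ hx
    rw [lie_sub, map_sub, sub_eq_zero] at h0
    simpa using h0
  intro n hn
  induction n with
  | zero => omega
  | succ m ih =>
    rcases Nat.eq_or_lt_of_le hn with h1 | h1
    · simp [← h1]
    · have hm : 1 ≤ m := by omega
      have := ih hm
      calc π ∘ₗ ((LieAlgebra.ad k L f) ^ (m + 1))
          = (π ∘ₗ LieAlgebra.ad k L f) ∘ₗ ((LieAlgebra.ad k L f) ^ m) := by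
            rw [pow_succ']; rfl
        _ = ((π ∘ₗ LieAlgebra.ad k L f) ∘ₗ π) ∘ₗ ((LieAlgebra.ad k L f) ^ m) := by rw [← key]
        _ = (π ∘ₗ LieAlgebra.ad k L f) ∘ₗ (π ∘ₗ ((LieAlgebra.ad k L f) ^ m)) := by
            rw [LinearMap.comp_assoc]
        _ = (π ∘ₗ LieAlgebra.ad k L f) ∘ₗ ((π ∘ₗ LieAlgebra.ad k L f) ^ m) := by rw [this]
        _ = (π ∘ₗ LieAlgebra.ad k L f) ^ (m + 1) := by rw [pow_succ']; rfl
end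

section
/- Let A be a finite-dimensional normed vector space over ℂ, let π : A → A be a continuous linear projection (π ∘ π = π) with image q, let K ⊆ ker π be a linear subspace, and let T : A → A be a continuous linear map such that T(q + K) ⊆ q + K and π(T k) = 0 for all k ∈ K. Then for every u ∈ q, π(exp(T) u) = exp(π ∘ T) u, where exp denotes the operator exponential exp(S) = Σ_{n≥0} S^n / n!. -/
/-!
On `q ⊔ K`, which `T` preserves, `π ∘ T = (π ∘ T) ∘ π` because `π` fixes `q` and kills both `K`
and `T K`. So `π` semiconjugates `T` to `π ∘ T` there, hence `π ∘ T ^ n = (π ∘ T) ^ n ∘ π` on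
`q ⊔ K`, and the exponential series of both sides agree term by term on `q`.
-/

open NormedSpace Nat

namespace ContinuousLinearMap

section Semiconj

variable {R M N : Type*} [Semiring R] [TopologicalSpace M] [AddCommMonoid M] [Module R M]
  [TopologicalSpace N] [AddCommMonoid N] [Module R N]

theorem apply_pow_apply_of_semiconj_on {π : M →L[R] N} {T : M →L[R] M} {S : N →L[R] N}
    {p : Submodule R M} (hT : ∀ x ∈ p, T x ∈ p) (h : ∀ x ∈ p, π (T x) = S (π x)) (n : ℕ) :
    ∀ x ∈ p, π ((T ^ n) x) = (S ^ n) (π x) := by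
  induction n with
  | zero => simp
  | succ n ih =>
    intro x hx
    rw [pow_succ, pow_succ, mul_apply_eq_comp, mul_apply_eq_comp,
      ih _ (hT x hx), h x hx]

end Semiconj

section Exp

variable {𝕂 E F : Type*} [RCLike 𝕂] [NormedAddCommGroup E] [NormedSpace 𝕂 E] [CompleteSpace E]
  [NormedAddCommGroup F] [NormedSpace 𝕂 F] [CompleteSpace F]

theorem hasSum_exp_apply (T : E →L[𝕂] E) (x : E) :
    HasSum (fun n => (n !⁻¹ : 𝕂) • (T ^ n) x) (exp T x) := by
  simpa using (exp_series_hasSum_exp' (𝕂 := 𝕂) T).mapL (apply 𝕂 E x)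

theorem map_exp_apply_of_semiconj {π : E →L[𝕂] F} {T : E →L[𝕂] E} {S : F →L[𝕂] F} {x : E}
    (h : ∀ n : ℕ, π ((T ^ n) x) = (S ^ n) (π x)) : π (exp T x) = exp S (π x) := by
  refine ((hasSum_exp_apply T x).mapL π).unique ?_
  simpa only [map_smul, h] using hasSum_exp_apply S (π x)

end Exp

end ContinuousLinearMap

open ContinuousLinearMap

/-- Let `A` be a finite-dimensional normed vector space over `ℂ`,
`π : A → A` a continuous linear projection (`π ∘ π = π`) with image `q`, `K ⊆ ker π` a
linear subspace, and `T : A → A` a continuous linear map with `T (q + K) ⊆ q + K` and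
`π (T x) = 0` for all `x ∈ K`.  Then for every `u ∈ q`,
`π (exp T u) = exp (π ∘ T) u`, where `exp` is the operator exponential. -/
theorem stmt2 {A : Type*} [NormedAddCommGroup A] [NormedSpace ℂ A] [FiniteDimensional ℂ A]
    (π T : A →L[ℂ] A) (q K : Submodule ℂ A)
    (hidem : π ∘L π = π)
    (hrange : LinearMap.range (π : A →ₗ[ℂ] A) = q)
    (hK : K ≤ LinearMap.ker (π : A →ₗ[ℂ] A))
    (hT : ∀ x ∈ q ⊔ K, T x ∈ q ⊔ K)
    (hTK : ∀ x ∈ K, π (T x) = 0) :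
    ∀ u ∈ q, π (NormedSpace.exp T u) = NormedSpace.exp (π ∘L T) u := by
  have hfix : ∀ a ∈ q, π a = a := fun a ha =>
    (LinearMap.IsIdempotentElem.mem_range_iff (IsIdempotentElem.toLinearMap hidem)).mp
      (hrange ▸ ha)
  have hsemiconj : ∀ x ∈ q ⊔ K, π (T x) = (π ∘L T) (π x) := by
    intro x hx
    obtain ⟨a, ha, k, hk, rfl⟩ := Submodule.mem_sup.mp hx
    have hk0 : π k = 0 := hK hk
    simp [hTK k hk, hfix a ha, hk0]
  intro u hu
  conv_rhs => rw [← hfix u hu]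
  exact map_exp_apply_of_semiconj fun n =>
    apply_pow_apply_of_semiconj_on hT hsemiconj n u (Submodule.mem_sup_left hu)
end

section
/- Let n ≥ 1 and let H be a twice continuously differentiable map from an open neighborhood of the origin in ℂ × ℂ (with coordinates (z, w), each identified with ℝ²) to the n×n complex matrices, with H(0,0) = 0. Set h = exp ∘ H, where exp is the matrix exponential; then h is invertible in a neighborhood of the origin, and with ∂_z and ∂_{w̄} denoting the Wirtinger derivatives, the following identity holds at the origin: ∂_{w̄}( h^{-1} · ∂_z h )(0,0) = (∂_z ∂_{w̄} H)(0,0) − (1/2)·[ (∂_{w̄} H)(0,0), (∂_z H)(0,0) ], where [A, B] = AB − BA. -/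
open Matrix Complex

attribute [local instance] Matrix.linftyOpNormedAddCommGroup Matrix.linftyOpNormedRing
  Matrix.linftyOpNormedAlgebra

/-- The Wirtinger derivative `∂_z` in the first variable of a function on `ℂ × ℂ`:
`∂_z f = (1/2)(∂_x f - i ∂_y f)`, with real directional derivatives applied entrywise. -/
noncomputable def dz {E : Type*} [NormedAddCommGroup E] [NormedSpace ℂ E]
    (f : ℂ × ℂ → E) (p : ℂ × ℂ) : E :=
  (2 : ℂ)⁻¹ • (fderiv ℝ f p (1, 0) - Complex.I • fderiv ℝ f p (Complex.I, 0))

/-- The Wirtinger derivative `∂_w̄` in the second variable of a function on `ℂ × ℂ`: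
`∂_w̄ f = (1/2)(∂_x f + i ∂_y f)`, with real directional derivatives applied entrywise. -/
noncomputable def dwbar {E : Type*} [NormedAddCommGroup E] [NormedSpace ℂ E]
    (f : ℂ × ℂ → E) (p : ℂ × ℂ) : E :=
  (2 : ℂ)⁻¹ • (fderiv ℝ f p (0, 1) + Complex.I • fderiv ℝ f p (0, Complex.I))

section aux
open NormedSpace
variable {𝔸 : Type*} [NormedRing 𝔸] [NormedAlgebra ℝ 𝔸] [CompleteSpace 𝔸]

theorem exp_real_contDiff_aux : ContDiff ℝ (⊤ : ℕ∞) (exp : 𝔸 → 𝔸) :=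
  contDiff_iff_contDiffAt.2 fun x => (exp_analytic x).contDiffAt

theorem exp_sndFDeriv_diag_aux (a : 𝔸) :
    fderiv ℝ (fderiv ℝ (exp : 𝔸 → 𝔸)) 0 a a = a * a := by
  have h1 := (exp_hasFPowerSeriesOnBall (𝕂 := ℝ) (𝔸 := 𝔸)).factorial_smul a 2
  rw [expSeries_apply_eq] at h1
  have h2 : iteratedFDeriv ℝ 2 (exp : 𝔸 → 𝔸) 0 (fun _ => a)
      = fderiv ℝ (fderiv ℝ (exp : 𝔸 → 𝔸)) 0 a a := iteratedFDeriv_two_apply _ _ _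
  rw [h2] at h1
  rw [← h1, ← Nat.cast_smul_eq_nsmul ℝ, smul_smul, mul_inv_cancel₀ (by norm_num), one_smul, sq]

theorem exp_sndFDeriv_aux (a b : 𝔸) :
    fderiv ℝ (fderiv ℝ (exp : 𝔸 → 𝔸)) 0 a b = (2 : ℝ)⁻¹ • (a * b + b * a) := by
  have hsymm : ∀ u v : 𝔸,
      fderiv ℝ (fderiv ℝ (exp : 𝔸 → 𝔸)) 0 u v = fderiv ℝ (fderiv ℝ (exp : 𝔸 → 𝔸)) 0 v u :=
    (exp_real_contDiff_aux.contDiffAt (x := (0:𝔸))).isSymmSndFDerivAt (by rw [minSmoothness_of_isRCLikeNormedField]; exact WithTop.coe_le_coe.2 le_top)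
  have key := exp_sndFDeriv_diag_aux (a + b)
  rw [map_add] at key
  simp only [ContinuousLinearMap.add_apply, map_add] at key
  rw [exp_sndFDeriv_diag_aux a, exp_sndFDeriv_diag_aux b, hsymm b a] at key
  have e : (a+b)*(a+b) = a*a + (a*b + b*a) + b*b := by noncomm_ring
  rw [e] at key
  have h2 : fderiv ℝ (fderiv ℝ (exp : 𝔸 → 𝔸)) 0 a b
      + fderiv ℝ (fderiv ℝ (exp : 𝔸 → 𝔸)) 0 a b = a * b + b * a := by
    abel_nf at key ⊢
    have k2 := add_left_cancel key
    exact add_right_cancel (k2.trans (add_comm _ _))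
  rw [← h2, ← two_smul ℝ, smul_smul]
  norm_num
end aux

section auxC
open NormedSpace
variable {𝔸 : Type*} [NormedRing 𝔸] [NormedAlgebra ℂ 𝔸] [CompleteSpace 𝔸]

theorem exp_complex_eq_real : (exp : 𝔸 → 𝔸) = (exp : 𝔸 → 𝔸) := rfl

theorem exp_contDiff_aux : ContDiff ℝ (⊤ : ℕ∞) (exp : 𝔸 → 𝔸) := by
  rw [exp_complex_eq_real]; exact exp_real_contDiff_aux

theorem exp_fderiv_zero_aux : fderiv ℝ (exp : 𝔸 → 𝔸) 0 = 1 := by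
  rw [exp_complex_eq_real]; exact hasFDerivAt_exp_zero.fderiv

theorem exp_sndFDeriv_aux' (a b : 𝔸) :
    fderiv ℝ (fderiv ℝ (exp : 𝔸 → 𝔸)) 0 a b = (2 : ℝ)⁻¹ • (a * b + b * a) := by
  rw [exp_complex_eq_real]; exact exp_sndFDeriv_aux a b
end auxC


set_option maxHeartbeats 2000000 in
/-- Let `n ≥ 1` and `H` be a twice continuously differentiable map from an
open neighborhood `U` of the origin of `ℂ × ℂ` to the `n×n` complex matrices with
`H (0,0) = 0`.  Put `h = exp ∘ H` (matrix exponential).  Then `h` is invertible in a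
neighborhood of the origin, and at the origin
`∂_w̄ (h⁻¹ · ∂_z h) = ∂_z ∂_w̄ H - (1/2) [∂_w̄ H, ∂_z H]`,
where `[A, B] = A B - B A`. -/
theorem stmt3 {n : ℕ} (hn : 1 ≤ n) {U : Set (ℂ × ℂ)} (hU : IsOpen U) (hU0 : (0, 0) ∈ U)
    (H : ℂ × ℂ → Matrix (Fin n) (Fin n) ℂ)
    (hH : ContDiffOn ℝ 2 H U) (hH0 : H (0, 0) = 0) :
    (∀ᶠ p in nhds ((0, 0) : ℂ × ℂ), IsUnit (NormedSpace.exp (H p)))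
    ∧ dwbar (fun p => (NormedSpace.exp (H p))⁻¹ * dz (fun x => NormedSpace.exp (H x)) p)
          (0, 0)
        = dz (fun p => dwbar H p) (0, 0)
          - (2 : ℂ)⁻¹ • (dwbar H (0, 0) * dz H (0, 0) - dz H (0, 0) * dwbar H (0, 0)) := by
  refine ⟨Filter.Eventually.of_forall fun p => Matrix.isUnit_exp (H p), ?_⟩
  have hUnhds : U ∈ nhds ((0,0) : ℂ × ℂ) := hU.mem_nhds hU0
  set h : ℂ × ℂ → Matrix (Fin n) (Fin n) ℂ := fun p => NormedSpace.exp (H p) with hh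
  have hpt : ∀ p, NormedSpace.exp (H p) = h p := fun p => rfl
  simp only [hpt, Matrix.nonsing_inv_eq_ringInverse, dz, dwbar]
  letI : TopologicalSpace (Matrix (Fin n) (Fin n) ℂ) :=
    (Matrix.linftyOpNormedAddCommGroup (m := Fin n) (n := Fin n) (α := ℂ)).toUniformSpace.toTopologicalSpace
  set A_ : (ℂ × ℂ) → ((ℂ × ℂ) →L[ℝ] Matrix (Fin n) (Fin n) ℂ) := fderiv ℝ H with hA_
  set Φ : (ℂ × ℂ) → ((ℂ × ℂ) →L[ℝ] Matrix (Fin n) (Fin n) ℂ) := fderiv ℝ h with hΦ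
  -- basic differentiability facts
  have hexpC : ContDiff ℝ (⊤ : ℕ∞) (NormedSpace.exp :
      Matrix (Fin n) (Fin n) ℂ → Matrix (Fin n) (Fin n) ℂ) := exp_contDiff_aux
  have hH2 : ContDiffAt ℝ 2 H (0,0) := hH.contDiffAt hUnhds
  have hHd : ∀ p ∈ U, HasFDerivAt H (A_ p) p := fun p hp =>
    (((hH.contDiffAt (hU.mem_nhds hp)).differentiableAt two_ne_zero)).hasFDerivAt
  have hhd : ∀ p ∈ U, HasFDerivAt h
      ((fderiv ℝ (NormedSpace.exp) (H p)).comp (A_ p)) p := fun p hp =>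
    ((hexpC.differentiable (by simp) (H p)).hasFDerivAt).comp p (hHd p hp)
  have hΦeq : ∀ p ∈ U, Φ p = (fderiv ℝ (NormedSpace.exp) (H p)).comp (A_ p) := fun p hp =>
    (hhd p hp).fderiv
  have hh2 : ContDiffAt ℝ 2 h (0,0) := (hexpC.contDiffAt.of_le (WithTop.coe_le_coe.2 le_top)).comp _ hH2
  -- second derivative of H
  set A' : (ℂ × ℂ) →L[ℝ] (ℂ × ℂ) →L[ℝ] Matrix (Fin n) (Fin n) ℂ := fderiv ℝ A_ (0,0) with hA'
  have hA'd : HasFDerivAt A_ A' (0,0) :=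
    ((hH2.fderiv_right (m := 1) (by norm_num)).differentiableAt one_ne_zero).hasFDerivAt
  have hsymH : ∀ v w, A' v w = A' w v := hH2.isSymmSndFDerivAt (by norm_num)
  -- derivative of p ↦ Dexp (H p)
  set Ψ' : Matrix (Fin n) (Fin n) ℂ →L[ℝ]
      Matrix (Fin n) (Fin n) ℂ →L[ℝ] Matrix (Fin n) (Fin n) ℂ :=
    fderiv ℝ (fderiv ℝ (NormedSpace.exp)) 0 with hΨ'
  have hΨd : HasFDerivAt (fderiv ℝ (NormedSpace.exp)) Ψ' (H (0,0)) := by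
    rw [hH0]
    exact (((hexpC.fderiv_right (m := 1) (WithTop.coe_le_coe.2 le_top)).differentiable one_ne_zero) 0).hasFDerivAt
  have hΨH : HasFDerivAt (fun p => fderiv ℝ (NormedSpace.exp) (H p))
      (Ψ'.comp (A_ (0,0))) (0,0) :=
    HasFDerivAt.comp (g := fderiv ℝ NormedSpace.exp) (0,0) hΨd (hHd _ hU0)
  -- derivative of Φ at the origin
  have hcomp := hΨH.clm_comp hA'd
  have hΦd0 := hcomp.congr_of_eventuallyEq (Filter.eventuallyEq_of_mem hUnhds hΦeq)
  set B : (ℂ × ℂ) →L[ℝ] (ℂ × ℂ) →L[ℝ] Matrix (Fin n) (Fin n) ℂ := fderiv ℝ Φ (0,0) with hB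
  have hΦd : HasFDerivAt Φ B (0,0) := hΦd0.differentiableAt.hasFDerivAt
  have hBval : ∀ u v, B u v = A' u v
      + (2:ℝ)⁻¹ • (A_ (0,0) u * A_ (0,0) v + A_ (0,0) v * A_ (0,0) u) := by
    intro u v
    rw [hB, hΦd0.fderiv]
    simp only [ContinuousLinearMap.add_apply, ContinuousLinearMap.comp_apply,
      ContinuousLinearMap.compL_apply, ContinuousLinearMap.flip_apply, hH0, hΨ',
      exp_fderiv_zero_aux, ContinuousLinearMap.one_def, ContinuousLinearMap.id_apply,
      exp_sndFDeriv_aux']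
  have hΦ00 : Φ (0,0) = A_ (0,0) := by
    rw [hΦeq _ hU0, hH0, exp_fderiv_zero_aux, ContinuousLinearMap.one_def,
      ContinuousLinearMap.id_comp]
  -- derivative of dz h
  set Dg : (ℂ × ℂ) →L[ℝ] Matrix (Fin n) (Fin n) ℂ :=
    (2:ℂ)⁻¹ • (B.flip (((1:ℂ),(0:ℂ)) : ℂ × ℂ)
      - Complex.I • B.flip ((Complex.I,(0:ℂ)) : ℂ × ℂ)) with hDg
  have h1 : HasFDerivAt (fun p => Φ p (((1:ℂ),(0:ℂ)) : ℂ × ℂ))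
      (B.flip (((1:ℂ),(0:ℂ)) : ℂ × ℂ)) (0,0) := by
    simpa using hΦd.clm_apply (hasFDerivAt_const (((1:ℂ),(0:ℂ)) : ℂ × ℂ) ((0,0) : ℂ × ℂ))
  have h2 : HasFDerivAt (fun p => Φ p ((Complex.I,(0:ℂ)) : ℂ × ℂ))
      (B.flip ((Complex.I,(0:ℂ)) : ℂ × ℂ)) (0,0) := by
    simpa using hΦd.clm_apply (hasFDerivAt_const ((Complex.I,(0:ℂ)) : ℂ × ℂ) ((0,0) : ℂ × ℂ))
  have hgd : HasFDerivAt
      (fun p => (2:ℂ)⁻¹ • (Φ p (((1:ℂ),(0:ℂ)) : ℂ × ℂ)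
        - Complex.I • Φ p ((Complex.I,(0:ℂ)) : ℂ × ℂ))) Dg (0,0) :=
    (h1.sub (h2.const_smul Complex.I)).const_smul ((2:ℂ)⁻¹)
  -- derivative of the inverse
  have h00 : h (0,0) = 1 := by simp only [hh, hH0, NormedSpace.exp_zero]
  have hhd0 : HasFDerivAt h (Φ (0,0)) (0,0) := (hh2.differentiableAt two_ne_zero).hasFDerivAt
  have hinvd : HasFDerivAt (fun p => Ring.inverse (h p))
      ((-(ContinuousLinearMap.mulLeftRight ℝ _ 1 1)).comp (Φ (0,0))) (0,0) := by
    have hi : HasFDerivAt (Ring.inverse : Matrix (Fin n) (Fin n) ℂ → Matrix (Fin n) (Fin n) ℂ)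
        (-(ContinuousLinearMap.mulLeftRight ℝ (Matrix (Fin n) (Fin n) ℂ) 1 1)) (h (0,0)) := by
      rw [h00]
      simpa using hasFDerivAt_ringInverse (𝕜 := ℝ) (1 : (Matrix (Fin n) (Fin n) ℂ)ˣ)
    exact hi.comp (0,0) hhd0
  -- product rule
  have hmul := hinvd.mul' hgd
  rw [h00, Ring.inverse_one, one_smul] at hmul
  set DF : (ℂ × ℂ) →L[ℝ] Matrix (Fin n) (Fin n) ℂ :=
    Dg + ((-(ContinuousLinearMap.mulLeftRight ℝ _ 1 1)).comp (Φ (0,0))).smulRight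
      ((2:ℂ)⁻¹ • (Φ (0,0) (((1:ℂ),(0:ℂ)) : ℂ × ℂ)
        - Complex.I • Φ (0,0) ((Complex.I,(0:ℂ)) : ℂ × ℂ))) with hDF
  have hLHS : fderiv ℝ (fun p => Ring.inverse (h p)
      * (2:ℂ)⁻¹ • (Φ p (((1:ℂ),(0:ℂ)) : ℂ × ℂ)
        - Complex.I • Φ p ((Complex.I,(0:ℂ)) : ℂ × ℂ))) (0,0) = DF := hmul.fderiv
  -- derivative of dwbar H
  have h3 : HasFDerivAt (fun p => A_ p (((0:ℂ),(1:ℂ)) : ℂ × ℂ))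
      (A'.flip (((0:ℂ),(1:ℂ)) : ℂ × ℂ)) (0,0) := by
    simpa using hA'd.clm_apply (hasFDerivAt_const (((0:ℂ),(1:ℂ)) : ℂ × ℂ) ((0,0) : ℂ × ℂ))
  have h4 : HasFDerivAt (fun p => A_ p (((0:ℂ),Complex.I) : ℂ × ℂ))
      (A'.flip (((0:ℂ),Complex.I) : ℂ × ℂ)) (0,0) := by
    simpa using hA'd.clm_apply (hasFDerivAt_const (((0:ℂ),Complex.I) : ℂ × ℂ) ((0,0) : ℂ × ℂ))
  set Dw : (ℂ × ℂ) →L[ℝ] Matrix (Fin n) (Fin n) ℂ :=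
    (2:ℂ)⁻¹ • (A'.flip (((0:ℂ),(1:ℂ)) : ℂ × ℂ)
      + Complex.I • A'.flip (((0:ℂ),Complex.I) : ℂ × ℂ)) with hDw
  have hwd : HasFDerivAt
      (fun p => (2:ℂ)⁻¹ • (A_ p (((0:ℂ),(1:ℂ)) : ℂ × ℂ)
        + Complex.I • A_ p (((0:ℂ),Complex.I) : ℂ × ℂ))) Dw (0,0) :=
    (h3.add (h4.const_smul Complex.I)).const_smul ((2:ℂ)⁻¹)
  have hRHS : fderiv ℝ (fun p => (2:ℂ)⁻¹ • (A_ p (((0:ℂ),(1:ℂ)) : ℂ × ℂ)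
        + Complex.I • A_ p (((0:ℂ),Complex.I) : ℂ × ℂ))) (0,0) = Dw := hwd.fderiv
  rw [hLHS, hRHS]
  have hc : ∀ x : Matrix (Fin n) (Fin n) ℂ, (2:ℝ)⁻¹ • x = (2:ℂ)⁻¹ • x := by
    intro x
    rw [← Complex.coe_smul]
    norm_num
  simp only [hDF, hDg, hDw, ContinuousLinearMap.add_apply, ContinuousLinearMap.smul_apply,
    ContinuousLinearMap.comp_apply, ContinuousLinearMap.flip_apply,
    ContinuousLinearMap.smulRight_apply, ContinuousLinearMap.neg_apply,
    ContinuousLinearMap.mulLeftRight_apply, ContinuousLinearMap.sub_apply, hΦ00,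
    one_mul, mul_one, hBval, hc, smul_eq_mul]
  rw [hsymH (((1:ℂ),(0:ℂ)) : ℂ × ℂ) (((0:ℂ),(1:ℂ)) : ℂ × ℂ),
    hsymH (((1:ℂ),(0:ℂ)) : ℂ × ℂ) (((0:ℂ),Complex.I) : ℂ × ℂ),
    hsymH ((Complex.I,(0:ℂ)) : ℂ × ℂ) (((0:ℂ),(1:ℂ)) : ℂ × ℂ),
    hsymH ((Complex.I,(0:ℂ)) : ℂ × ℂ) (((0:ℂ),Complex.I) : ℂ × ℂ)]
  simp only [smul_add, smul_sub, smul_smul, mul_add, add_mul, mul_sub, sub_mul,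
    smul_mul_assoc, mul_smul_comm, neg_mul, neg_smul]
  match_scalars <;> ring
end

section
/- For all n×n complex matrices X and Y, one has −⟪[[X, Xᴴ], Y], Y⟫ = ‖[X, Y]‖² − ‖[Xᴴ, Y]‖², where ‖·‖ is the Frobenius norm and Xᴴ the conjugate transpose. In particular the left-hand side is a real number. -/
open Matrix

/-- For all `n×n` complex matrices `X` and `Y`, with the Frobenius inner
product `⟪A, B⟫ = Tr (A Bᴴ)`, squared Frobenius norm `‖A‖² = Tr (A Aᴴ)` and bracket
`[A, B] = A B - B A`, one has
`-⟪[[X, Xᴴ], Y], Y⟫ = ‖[X, Y]‖² - ‖[Xᴴ, Y]‖²`;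
in particular the left-hand side is a real number (zero imaginary part). -/
theorem stmt5 {n : ℕ} (X Y : Matrix (Fin n) (Fin n) ℂ) :
    (-((((X * Xᴴ - Xᴴ * X) * Y - Y * (X * Xᴴ - Xᴴ * X)) * Yᴴ).trace)
        = ((X * Y - Y * X) * (X * Y - Y * X)ᴴ).trace
          - ((Xᴴ * Y - Y * Xᴴ) * (Xᴴ * Y - Y * Xᴴ)ᴴ).trace)
    ∧ (-((((X * Xᴴ - Xᴴ * X) * Y - Y * (X * Xᴴ - Xᴴ * X)) * Yᴴ).trace)).im = 0 := by
  have h1 : ∀ A B C D : Matrix (Fin n) (Fin n) ℂ,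
      (A*(B*(C*D))).trace = (B*(C*(D*A))).trace := by
    intro A B C D
    rw [trace_mul_comm, mul_assoc, mul_assoc]
  have heq : (-((((X * Xᴴ - Xᴴ * X) * Y - Y * (X * Xᴴ - Xᴴ * X)) * Yᴴ).trace)
        = ((X * Y - Y * X) * (X * Y - Y * X)ᴴ).trace
          - ((Xᴴ * Y - Y * Xᴴ) * (Xᴴ * Y - Y * Xᴴ)ᴴ).trace) := by
    simp only [conjTranspose_sub, conjTranspose_mul, conjTranspose_conjTranspose,
      mul_sub, sub_mul, trace_sub, mul_assoc]
    rw [h1 Xᴴ Y Yᴴ X, h1 Y Yᴴ X Xᴴ, h1 Yᴴ X Xᴴ Y,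
        h1 X Y Yᴴ Xᴴ, h1 Y Yᴴ Xᴴ X, h1 Yᴴ Xᴴ X Y,
        h1 Y Xᴴ Yᴴ X, h1 Xᴴ Yᴴ X Y, h1 Yᴴ X Y Xᴴ,
        h1 Xᴴ Y X Yᴴ]
    ring
  have him : ∀ A : Matrix (Fin n) (Fin n) ℂ, ((A*Aᴴ).trace).im = 0 := by
    intro A
    simp [trace, diag, mul_apply, conjTranspose_apply, Complex.im_sum, Complex.mul_conj]
  refine ⟨heq, ?_⟩
  rw [heq, Complex.sub_im, him, him, sub_zero]
end

section
/- Let V be a finite-dimensional complex inner product space, let U ⊆ ℂ be open, let γ : U → V be holomorphic, and let s₀ ∈ U be a point with γ(s₀) ≠ 0. Then the function f(s) = log ‖γ(s)‖² is smooth in a neighborhood of s₀ and its Laplacian (the sum of the second directional derivatives along the directions 1 and i of ℂ ≅ ℝ²) satisfies Δf(s₀) = 4 · ( ‖γ'(s₀)‖² ‖γ(s₀)‖² − |⟨γ'(s₀), γ(s₀)⟩|² ) / ‖γ(s₀)‖⁴. In particular Δf(s₀) ≥ 0, and Δf(s₀) = 0 if and only if γ(s₀) and γ'(s₀) are linearly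 dependent over ℂ. -/
open Complex

set_option maxHeartbeats 1000000

/-- The Laplacian of a function `f : ℂ → ℝ` at a point, computed as the sum of the second
directional derivatives along the directions `1` and `i` of `ℂ ≅ ℝ²`. -/
noncomputable def laplacian (f : ℂ → ℝ) (s : ℂ) : ℝ :=
  fderiv ℝ (fun z => fderiv ℝ f z 1) s 1
    + fderiv ℝ (fun z => fderiv ℝ f z Complex.I) s Complex.I

/-- Let `V` be a finite-dimensional complex inner product space, `U ⊆ ℂ`
open, `γ : U → V` holomorphic and `s₀ ∈ U` with `γ s₀ ≠ 0`.  Then `f s = log ‖γ s‖²` is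
smooth in a neighborhood of `s₀` and its Laplacian at `s₀` equals
`4 (‖γ' s₀‖² ‖γ s₀‖² - |⟨γ' s₀, γ s₀⟩|²) / ‖γ s₀‖⁴`;
in particular it is `≥ 0`, with equality iff `γ s₀` and `γ' s₀` are linearly dependent
over `ℂ`. -/
theorem stmt6 {V : Type*} [NormedAddCommGroup V] [InnerProductSpace ℂ V]
    [FiniteDimensional ℂ V] {U : Set ℂ} (hU : IsOpen U) {γ : ℂ → V}
    (hγ : DifferentiableOn ℂ γ U) {s₀ : ℂ} (hs₀ : s₀ ∈ U) (hne : γ s₀ ≠ 0) :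
    (∃ W : Set ℂ, IsOpen W ∧ s₀ ∈ W ∧
        ContDiffOn ℝ (⊤ : ℕ∞) (fun s => Real.log (‖γ s‖ ^ 2)) W)
    ∧ laplacian (fun s => Real.log (‖γ s‖ ^ 2)) s₀
        = 4 * (‖deriv γ s₀‖ ^ 2 * ‖γ s₀‖ ^ 2
            - ‖(inner ℂ (deriv γ s₀) (γ s₀) : ℂ)‖ ^ 2) / ‖γ s₀‖ ^ 4
    ∧ 0 ≤ laplacian (fun s => Real.log (‖γ s‖ ^ 2)) s₀
    ∧ (laplacian (fun s => Real.log (‖γ s‖ ^ 2)) s₀ = 0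
        ↔ ¬ LinearIndependent ℂ ![γ s₀, deriv γ s₀]) := by
  set d : ℂ → V := deriv γ with hdd
  set W : Set ℂ := U ∩ γ ⁻¹' {(0 : V)}ᶜ with hWdef
  have hWo : IsOpen W := hγ.continuousOn.isOpen_inter_preimage hU isClosed_singleton.isOpen_compl
  have hmemW : ∀ z ∈ W, z ∈ U ∧ γ z ≠ 0 := fun z hz => ⟨hz.1, by simpa using hz.2⟩
  have hpos : ∀ z ∈ W, (0:ℝ) < ‖γ z‖ ^ 2 := fun z hz =>
    pow_pos (norm_pos_iff.mpr (hmemW z hz).2) 2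
  have hA : AnalyticOnNhd ℂ γ U := hγ.analyticOnNhd hU
  have hsmooth : ContDiffOn ℝ (⊤ : ℕ∞) (fun s => Real.log (‖γ s‖ ^ 2)) W := by
    intro z hz
    exact ((((hA z (hmemW z hz).1).contDiffAt.restrict_scalars ℝ).norm_sq ℂ).log
      (hpos z hz).ne').contDiffWithinAt
  set DG : ℂ → (ℂ →L[ℝ] V) := fun z => ((1 : ℂ →L[ℂ] ℂ).smulRight (d z)).restrictScalars ℝ
    with hDGdef
  have hDG : ∀ z ∈ U, HasFDerivAt γ (DG z) z := fun z hz =>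
    ((hγ.differentiableAt (hU.mem_nhds hz)).hasDerivAt.hasFDerivAt).restrictScalars ℝ
  set N' : ℂ → (ℂ →L[ℝ] ℝ) := fun z =>
    reCLM.comp ((fderivInnerCLM ℂ (γ z, γ z)).comp ((DG z).prod (DG z))) with hN'def
  have hN : ∀ z ∈ U, HasFDerivAt (fun s => ‖γ s‖ ^ 2) (N' z) z := by
    intro z hz
    have h1 : HasFDerivAt (fun s => (inner ℂ (γ s) (γ s) : ℂ))
        ((fderivInnerCLM ℂ (γ z, γ z)).comp ((DG z).prod (DG z))) z :=
      (hDG z hz).inner ℂ (hDG z hz)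
    have h2 := reCLM.hasFDerivAt.comp z h1
    have h3 : ∀ x : V, ((inner ℂ x x : ℂ)).re = ‖x‖ ^ 2 := fun x => by
      rw [← inner_self_eq_norm_sq (𝕜 := ℂ)]; rfl
    simpa [Function.comp_def, h3, ← Complex.ofReal_pow, Complex.ofReal_re] using h2
  have hf1 : ∀ z ∈ W, HasFDerivAt (fun s => Real.log (‖γ s‖ ^ 2))
      ((‖γ z‖ ^ 2)⁻¹ • N' z) z := fun z hz => (hN z (hmemW z hz).1).log (hpos z hz).ne'
  have hval : ∀ z ∈ W, ∀ v : ℂ,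
      fderiv ℝ (fun s => Real.log (‖γ s‖ ^ 2)) z v
        = 2 * (v * (inner ℂ (γ z) (d z) : ℂ)).re / ‖γ z‖ ^ 2 := by
    intro z hz v
    rw [(hf1 z hz).fderiv]
    have h4 : (inner ℂ (d z) (γ z) : ℂ).re = (inner ℂ (γ z) (d z) : ℂ).re := by
      rw [← inner_conj_symm (𝕜 := ℂ) (d z) (γ z)]; exact Complex.conj_re _
    have h5 : (inner ℂ (d z) (γ z) : ℂ).im = -(inner ℂ (γ z) (d z) : ℂ).im := by
      rw [← inner_conj_symm (𝕜 := ℂ) (d z) (γ z)]; exact Complex.conj_im _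
    simp [h4, h5, hN'def, hDGdef, fderivInnerCLM_apply, inner_smul_left, inner_smul_right,
      Complex.add_re, Complex.mul_re, Complex.conj_re, Complex.conj_im]
    ring
  -- second derivative data at s₀
  have hA' : AnalyticOnNhd ℂ d U := hA.deriv
  have hs₀W : s₀ ∈ W := ⟨hs₀, by simpa using hne⟩
  set b2 : V := deriv d s₀ with hb2
  have hdb : HasFDerivAt d (((1 : ℂ →L[ℂ] ℂ).smulRight b2).restrictScalars ℝ) s₀ :=
    ((hA' s₀ hs₀).differentiableAt.hasDerivAt.hasFDerivAt).restrictScalars ℝ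
  set C' : ℂ →L[ℝ] ℂ := (fderivInnerCLM ℂ (γ s₀, d s₀)).comp
    ((DG s₀).prod (((1 : ℂ →L[ℂ] ℂ).smulRight b2).restrictScalars ℝ)) with hC'def
  have hc : HasFDerivAt (fun z => (inner ℂ (γ z) (d z) : ℂ)) C' s₀ :=
    (hDG s₀ hs₀).inner ℂ hdb
  have hnum1 : HasFDerivAt (fun z => 2 * (inner ℂ (γ z) (d z) : ℂ).re)
      ((2:ℝ) • (reCLM.comp C')) s₀ := by
    have := (reCLM.hasFDerivAt.comp s₀ hc).const_mul (2:ℝ)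
    simpa [Function.comp_def] using this
  have hnumI : HasFDerivAt (fun z => -(2 * (inner ℂ (γ z) (d z) : ℂ).im))
      (-((2:ℝ) • (imCLM.comp C'))) s₀ := by
    have := ((imCLM.hasFDerivAt.comp s₀ hc).const_mul (2:ℝ)).neg
    simpa [Function.comp_def, Pi.neg_def] using this
  have hinv : HasFDerivAt (fun z => (‖γ z‖ ^ 2)⁻¹)
      ((-((‖γ s₀‖ ^ 2) ^ 2)⁻¹) • N' s₀) s₀ := by
    have := (hasDerivAt_inv (hpos s₀ hs₀W).ne').comp_hasFDerivAt s₀ (hN s₀ hs₀)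
    exact this
  have hP := hnum1.mul hinv
  have hQ := hnumI.mul hinv
  have e1 : (fun z => fderiv ℝ (fun s => Real.log (‖γ s‖ ^ 2)) z 1)
      =ᶠ[nhds s₀] (fun z => 2 * (inner ℂ (γ z) (d z) : ℂ).re * (‖γ z‖ ^ 2)⁻¹) := by
    filter_upwards [hWo.mem_nhds hs₀W] with z hz
    rw [hval z hz 1]
    simp [div_eq_mul_inv]
  have eI : (fun z => fderiv ℝ (fun s => Real.log (‖γ s‖ ^ 2)) z Complex.I)
      =ᶠ[nhds s₀] (fun z => -(2 * (inner ℂ (γ z) (d z) : ℂ).im) * (‖γ z‖ ^ 2)⁻¹) := by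
    filter_upwards [hWo.mem_nhds hs₀W] with z hz
    rw [hval z hz Complex.I]
    simp [div_eq_mul_inv, Complex.mul_re]
  have h3 : ∀ x : V, ((inner ℂ x x : ℂ)).re = ‖x‖ ^ 2 := fun x => by
    rw [← inner_self_eq_norm_sq (𝕜 := ℂ)]; rfl
  have him : ∀ x : V, ((inner ℂ x x : ℂ)).im = 0 := fun x => by
    rw [← inner_self_im (𝕜 := ℂ) (x := x)]; rfl
  have h4 : (inner ℂ (d s₀) (γ s₀) : ℂ).re = (inner ℂ (γ s₀) (d s₀) : ℂ).re := by
    rw [← inner_conj_symm (𝕜 := ℂ) (d s₀) (γ s₀)]; exact Complex.conj_re _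
  have h5 : (inner ℂ (d s₀) (γ s₀) : ℂ).im = -(inner ℂ (γ s₀) (d s₀) : ℂ).im := by
    rw [← inner_conj_symm (𝕜 := ℂ) (d s₀) (γ s₀)]; exact Complex.conj_im _
  have hlap : laplacian (fun s => Real.log (‖γ s‖ ^ 2)) s₀
      = ((2 * (inner ℂ (γ s₀) (d s₀) : ℂ).re) • ((-((‖γ s₀‖ ^ 2) ^ 2)⁻¹) • N' s₀)
          + (‖γ s₀‖ ^ 2)⁻¹ • ((2:ℝ) • (reCLM.comp C'))) 1
        + ((-(2 * (inner ℂ (γ s₀) (d s₀) : ℂ).im)) • ((-((‖γ s₀‖ ^ 2) ^ 2)⁻¹) • N' s₀)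
          + (‖γ s₀‖ ^ 2)⁻¹ • (-((2:ℝ) • (imCLM.comp C')))) Complex.I := by
    simp only [laplacian]
    rw [Filter.EventuallyEq.fderiv_eq e1, Filter.EventuallyEq.fderiv_eq eI,
      HasFDerivAt.fderiv (f := fun z => 2 * (inner ℂ (γ z) (d z) : ℂ).re * (‖γ z‖ ^ 2)⁻¹) hP,
      HasFDerivAt.fderiv (f := fun z => -(2 * (inner ℂ (γ z) (d z) : ℂ).im) * (‖γ z‖ ^ 2)⁻¹) hQ]
  have hmain : laplacian (fun s => Real.log (‖γ s‖ ^ 2)) s₀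
      = 4 * (‖deriv γ s₀‖ ^ 2 * ‖γ s₀‖ ^ 2
          - ((inner ℂ (γ s₀) (deriv γ s₀) : ℂ).re ^ 2 + (inner ℂ (γ s₀) (deriv γ s₀) : ℂ).im ^ 2))
        / ‖γ s₀‖ ^ 4 := by
   rw [hlap]
   simp only [ContinuousLinearMap.add_apply, ContinuousLinearMap.smul_apply,
    ContinuousLinearMap.coe_comp', Function.comp_apply, ContinuousLinearMap.prod_apply,
    ContinuousLinearMap.coe_restrictScalars', ContinuousLinearMap.smulRight_apply,
    ContinuousLinearMap.one_apply, ContinuousLinearMap.neg_apply,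
     hN'def, hC'def, fderivInnerCLM_apply, reCLM_apply, imCLM_apply,
     hDGdef, inner_smul_left, inner_smul_right]
   simp only [one_smul, Complex.add_re, Complex.add_im, Complex.mul_re, Complex.mul_im,
     Complex.I_re, Complex.I_im, Complex.one_re, Complex.one_im, Complex.conj_re,
     Complex.conj_im, map_one, Complex.ofReal_one, h3, him, h4, h5, smul_eq_mul]
   have hn0 : ‖γ s₀‖ ≠ 0 := norm_ne_zero_iff.mpr hne
   field_simp
   ring
  -- rewrite in terms of Complex.abs
  have habs : ‖(inner ℂ (d s₀) (γ s₀) : ℂ)‖ ^ 2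
      = (inner ℂ (γ s₀) (d s₀) : ℂ).re ^ 2 + (inner ℂ (γ s₀) (d s₀) : ℂ).im ^ 2 := by
    have e : ‖(inner ℂ (d s₀) (γ s₀) : ℂ)‖
        = ‖(inner ℂ (γ s₀) (d s₀) : ℂ)‖ := by
      rw [← inner_conj_symm (𝕜 := ℂ) (d s₀) (γ s₀)]
      exact Complex.norm_conj _
    rw [e, Complex.sq_norm, Complex.normSq_apply]; ring
  have hmain' : laplacian (fun s => Real.log (‖γ s‖ ^ 2)) s₀
      = 4 * (‖d s₀‖ ^ 2 * ‖γ s₀‖ ^ 2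
          - ‖(inner ℂ (d s₀) (γ s₀) : ℂ)‖ ^ 2) / ‖γ s₀‖ ^ 4 := by
    rw [hmain, habs]
  -- Cauchy–Schwarz
  have hCS : ‖(inner ℂ (d s₀) (γ s₀) : ℂ)‖ ≤ ‖d s₀‖ * ‖γ s₀‖ := by
    simpa using norm_inner_le_norm (𝕜 := ℂ) (d s₀) (γ s₀)
  have hCS2 : ‖(inner ℂ (d s₀) (γ s₀) : ℂ)‖ ^ 2
      ≤ ‖d s₀‖ ^ 2 * ‖γ s₀‖ ^ 2 := by
    nlinarith [norm_nonneg (inner ℂ (d s₀) (γ s₀) : ℂ),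
      norm_nonneg (d s₀), norm_nonneg (γ s₀)]
  have hn0 : ‖γ s₀‖ ≠ 0 := norm_ne_zero_iff.mpr hne
  have hnonneg : 0 ≤ laplacian (fun s => Real.log (‖γ s‖ ^ 2)) s₀ := by
    rw [hmain']
    apply div_nonneg _ (by positivity)
    nlinarith
  refine ⟨⟨W, hWo, hs₀W, hsmooth⟩, hmain', hnonneg, ?_⟩
  -- equality case
  have hzero : laplacian (fun s => Real.log (‖γ s‖ ^ 2)) s₀ = 0
      ↔ ‖(inner ℂ (d s₀) (γ s₀) : ℂ)‖ = ‖d s₀‖ * ‖γ s₀‖ := by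
    rw [hmain']
    constructor
    · intro h
      have h4 : ‖γ s₀‖ ^ 4 ≠ 0 := by positivity
      have : ‖d s₀‖ ^ 2 * ‖γ s₀‖ ^ 2
          - ‖(inner ℂ (d s₀) (γ s₀) : ℂ)‖ ^ 2 = 0 := by
        rcases div_eq_zero_iff.mp h with h' | h'
        · linarith [mul_eq_zero.mp h' |>.resolve_left (by norm_num)]
        · exact absurd h' h4
      nlinarith [norm_nonneg (inner ℂ (d s₀) (γ s₀) : ℂ),
        norm_nonneg (d s₀), norm_nonneg (γ s₀),
        mul_nonneg (norm_nonneg (d s₀)) (norm_nonneg (γ s₀))]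
    · intro h
      rw [h, mul_pow]
      simp
  have hdep : (¬ LinearIndependent ℂ ![γ s₀, d s₀])
      ↔ (d s₀ = 0 ∨ ∃ r : ℂ, r • d s₀ = γ s₀) := by
    rw [linearIndependent_fin2]
    push_neg
    simp only [Matrix.cons_val_one, Matrix.head_cons, Matrix.cons_val_zero]
    constructor
    · intro h
      by_cases hb : d s₀ = 0
      · exact Or.inl hb
      · obtain ⟨r, hr⟩ := h hb
        exact Or.inr ⟨r, not_not.mp (by simpa using hr)⟩
    · rintro (hb | ⟨r, hr⟩)
      · intro h; exact absurd hb h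
      · intro _; exact ⟨r, by simpa using hr⟩
  rw [hzero, hdep]
  constructor
  · intro h
    by_cases hb : d s₀ = 0
    · exact Or.inl hb
    · obtain ⟨r, hr0, hra⟩ := (norm_inner_eq_norm_iff (𝕜 := ℂ) hb hne).mp (by simpa using h)
      exact Or.inr ⟨r, hra.symm⟩
  · rintro (hb | ⟨r, hr⟩)
    · simp [hb]
    · have hr0 : r ≠ 0 := by
        rintro rfl
        rw [zero_smul] at hr
        exact hne hr.symm
      have hb : d s₀ ≠ 0 := by
        rintro hb
        rw [hb, smul_zero] at hr
        exact hne hr.symm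
      have := (norm_inner_eq_norm_iff (𝕜 := ℂ) hb hne).mpr ⟨r, hr0, hr.symm⟩
      simpa using this
end
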